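/- For every sample size n ≥ 1 and all data y_1 < … < y_n, the Jeffreys prior for the GEV distribution yields an improper posterior: with π(ξ) = π_J(ξ), the GEV posterior normalizing constant K_n(π_J; y) = +∞. -/
import Mathlib


open MeasureTheory Real Set
open scoped ENNReal Classical

/-- The GEV posterior integrand for data `y`, at parameters `(μ, σ, ξ)`:
`σ^{-(n+1)} ∏_i (1 + ξ(y_i - μ)/σ)^{-(1+1/ξ)} exp(-Σ_i (1 + ξ(y_i - μ)/σ)^{-1/ξ})`
on the set where `1 + ξ(y_i - μ)/σ > 0` for all `i` (and `0` otherwise), with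
the Gumbel interpretation
`σ^{-(n+1)} exp(-Σ_i (y_i - μ)/σ) exp(-Σ_i exp(-(y_i - μ)/σ))` when `ξ = 0`. -/
noncomputable def gevDens (n : ℕ) (y : Fin n → ℝ) (μ σ ξ : ℝ) : ℝ :=
  if ξ = 0 then
    σ ^ (-((n : ℝ) + 1)) * Real.exp (-∑ i, (y i - μ) / σ) *
      Real.exp (-∑ i, Real.exp (-((y i - μ) / σ)))
  else if ∀ i, 0 < 1 + ξ * (y i - μ) / σ then
    σ ^ (-((n : ℝ) + 1)) * (∏ i, (1 + ξ * (y i - μ) / σ) ^ (-(1 + 1 / ξ))) *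
      Real.exp (-∑ i, (1 + ξ * (y i - μ) / σ) ^ (-1 / ξ))
  else 0

/-- The GEV posterior normalizing constant `K_n(π; y)` arising from a
GEV(μ, σ, ξ) likelihood for `y_1, …, y_n` and the prior `π(μ,σ,ξ) ∝ π(ξ)/σ`. -/
noncomputable def gevK (n : ℕ) (y : Fin n → ℝ) (p : ℝ → ℝ) : ℝ≥0∞ :=
  ∫⁻ ξ : ℝ, ENNReal.ofReal (p ξ) *
    ∫⁻ μ : ℝ, ∫⁻ σ in Set.Ioi (0 : ℝ), ENNReal.ofReal (gevDens n y μ σ ξ)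

/-- The digamma function `ψ = (log ∘ Γ)'`. -/
noncomputable def digamma (x : ℝ) : ℝ := deriv (Real.log ∘ Real.Gamma) x

/-- `T₁(ξ) = (π²/6 + (1-γ)²)(1+ξ)² Γ(1+2ξ)`. -/
noncomputable def jeffreysT1 (ξ : ℝ) : ℝ :=
  (Real.pi ^ 2 / 6 + (1 - Real.eulerMascheroniConstant) ^ 2) * (1 + ξ) ^ 2 *
    Real.Gamma (1 + 2 * ξ)

/-- `T₂(ξ) = π²/6 + (2(1-γ)(γ+ψ(1+ξ)) - π²/3) Γ(2+ξ) - (1+ψ(1+ξ))² Γ(2+ξ)²`. -/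
noncomputable def jeffreysT2 (ξ : ℝ) : ℝ :=
  Real.pi ^ 2 / 6 +
    (2 * (1 - Real.eulerMascheroniConstant) *
        (Real.eulerMascheroniConstant + digamma (1 + ξ)) -
      Real.pi ^ 2 / 3) * Real.Gamma (2 + ξ) -
    (1 + digamma (1 + ξ)) ^ 2 * Real.Gamma (2 + ξ) ^ 2

/-- The ξ-component `π_J(ξ) = ξ^{-2} √(T₁(ξ) + T₂(ξ))` of the Jeffreys prior
for the GEV distribution, defined for `ξ > -1/2` (and `0` for `ξ ≤ -1/2`). -/
noncomputable def jeffreysXi (ξ : ℝ) : ℝ :=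
  if -1 / 2 < ξ then (ξ ^ 2)⁻¹ * Real.sqrt (jeffreysT1 ξ + jeffreysT2 ξ) else 0

set_option maxHeartbeats 1600000

lemma auxGev_logGamma_succ {x : ℝ} (hx : 0 < x) :
    Real.log (Real.Gamma (x+1)) = Real.log x + Real.log (Real.Gamma x) := by
  rw [Real.Gamma_add_one hx.ne', Real.log_mul hx.ne' (Real.Gamma_pos_of_pos hx).ne']

lemma auxGev_Gamma_three : Real.Gamma 3 = 2 := by
  have h := Real.Gamma_nat_eq_factorial 2
  have e : ((2:ℕ):ℝ) + 1 = 3 := by norm_num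
  rw [e] at h
  rw [h]; norm_num [Nat.factorial]

lemma auxGev_Gamma_six : Real.Gamma 6 = 120 := by
  have h := Real.Gamma_nat_eq_factorial 5
  have e : ((5:ℕ):ℝ) + 1 = 6 := by norm_num
  rw [e] at h
  rw [h]; norm_num [Nat.factorial]

lemma auxGev_logGamma_nonneg {x : ℝ} (hx : 3 ≤ x) : 0 ≤ Real.log (Real.Gamma x) := by
  have h2 : Real.log (Real.Gamma 2) = 0 := by rw [Real.Gamma_two, Real.log_one]
  have h3 : Real.log (Real.Gamma 3) = Real.log 2 := by rw [auxGev_Gamma_three]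
  have hlog2 : 0 ≤ Real.log 2 := Real.log_nonneg one_le_two
  rcases eq_or_lt_of_le hx with h | h
  · rw [← h, h3]; exact hlog2
  · have H := convexOn_log_Gamma.slope_mono_adjacent (show (2:ℝ) ∈ Ioi 0 by norm_num)
      (show x ∈ Ioi 0 by simp; linarith) (show (2:ℝ) < 3 by norm_num) h
    simp only [Function.comp, slope_def_field, h2, h3] at H
    norm_num at H
    have hx3 : 0 < x - 3 := by linarith
    have := (le_div_iff₀ hx3).mp H
    nlinarith [hlog2]

lemma auxGev_one_le_Gamma {x : ℝ} (hx : 3 ≤ x) : 1 ≤ Real.Gamma x := by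
  have hpos : 0 < x := by linarith
  have := auxGev_logGamma_nonneg hx
  calc (1:ℝ) = Real.exp 0 := Real.exp_zero.symm
    _ ≤ Real.exp (Real.log (Real.Gamma x)) := Real.exp_le_exp.mpr this
    _ = Real.Gamma x := Real.exp_log (Real.Gamma_pos_of_pos hpos)

lemma auxGev_Gamma_ge_rpow {ξ : ℝ} (hξ : 3 ≤ ξ) : ξ ^ ξ ≤ Real.Gamma (1+2*ξ) := by
  have hξ0 : (0:ℝ) < ξ := by linarith
  have H := convexOn_log_Gamma.slope_mono_adjacent (show ξ ∈ Ioi 0 from hξ0)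
    (show 1+2*ξ ∈ Ioi 0 by simp; linarith) (show ξ < 1+ξ by linarith)
    (show 1+ξ < 1+2*ξ by linarith)
  simp only [Function.comp, slope_def_field] at H
  have e1 : Real.log (Real.Gamma (1+ξ)) - Real.log (Real.Gamma ξ) = Real.log ξ := by
    rw [show (1:ℝ)+ξ = ξ+1 by ring, auxGev_logGamma_succ hξ0]; ring
  rw [show (1+ξ-ξ : ℝ) = 1 by ring, show (1+2*ξ-(1+ξ) : ℝ) = ξ by ring, div_one, e1] at H
  have h1ξ : 0 ≤ Real.log (Real.Gamma (1+ξ)) := auxGev_logGamma_nonneg (by linarith)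
  have hfx : ξ * Real.log ξ ≤ Real.log (Real.Gamma (1+2*ξ)) := by
    have := (le_div_iff₀ hξ0).mp H
    nlinarith
  calc ξ ^ ξ = Real.exp (Real.log ξ * ξ) := Real.rpow_def_of_pos hξ0 ξ
    _ ≤ Real.exp (Real.log (Real.Gamma (1+2*ξ))) := Real.exp_le_exp.mpr (by nlinarith)
    _ = Real.Gamma (1+2*ξ) := Real.exp_log (Real.Gamma_pos_of_pos (by linarith))

lemma auxGev_Gamma_sq_le {ξ : ℝ} (hξ : 8 ≤ ξ) :
    14 * Real.Gamma (2+ξ)^2 ≤ Real.Gamma (1+2*ξ) := by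
  have h22 : (0:ℝ) < 2*ξ-2 := by linarith
  have hG : 0 < Real.Gamma (2*ξ-2) := Real.Gamma_pos_of_pos h22
  have hmid := convexOn_log_Gamma.2 (show (6:ℝ) ∈ Ioi 0 by norm_num)
    (show 2*ξ-2 ∈ Ioi 0 from h22) (by norm_num : (0:ℝ) ≤ 1/2) (by norm_num : (0:ℝ) ≤ 1/2)
    (by norm_num)
  have emid : (1/2:ℝ) • (6:ℝ) + (1/2:ℝ) • (2*ξ-2) = 2+ξ := by
    simp [smul_eq_mul]; ring
  rw [emid] at hmid
  simp only [Function.comp, smul_eq_mul] at hmid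
  have hGpos : 0 < Real.Gamma (2+ξ) := Real.Gamma_pos_of_pos (by linarith)
  have h1 : Real.Gamma (2+ξ)^2 ≤ 120 * Real.Gamma (2*ξ-2) := by
    have h2 := Real.exp_le_exp.mpr (mul_le_mul_of_nonneg_left hmid (by norm_num : (0:ℝ) ≤ 2))
    have e1 : Real.exp (2 * Real.log (Real.Gamma (2+ξ))) = Real.Gamma (2+ξ)^2 := by
      rw [two_mul, Real.exp_add, Real.exp_log hGpos]; ring
    have e2 : Real.exp (2 * (1/2 * Real.log (Real.Gamma 6) + 1/2 * Real.log (Real.Gamma (2*ξ-2))))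
        = 120 * Real.Gamma (2*ξ-2) := by
      rw [show (2 * (1/2 * Real.log (Real.Gamma 6) + 1/2 * Real.log (Real.Gamma (2*ξ-2))) : ℝ)
          = Real.log (Real.Gamma 6) + Real.log (Real.Gamma (2*ξ-2)) by ring,
        Real.exp_add, Real.exp_log (by rw [auxGev_Gamma_six]; norm_num),
        Real.exp_log hG, auxGev_Gamma_six]
    rw [e1, e2] at h2
    exact h2
  -- recurrence: Γ(1+2ξ) = 2ξ (2ξ-1) (2ξ-2) Γ(2ξ-2)
  have r1 : Real.Gamma (2*ξ-1) = (2*ξ-2) * Real.Gamma (2*ξ-2) := by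
    rw [show (2*ξ-1 : ℝ) = (2*ξ-2) + 1 by ring, Real.Gamma_add_one h22.ne']
  have r2 : Real.Gamma (2*ξ) = (2*ξ-1) * Real.Gamma (2*ξ-1) := by
    conv_lhs => rw [show (2*ξ : ℝ) = (2*ξ-1) + 1 by ring]
    rw [Real.Gamma_add_one (ne_of_gt (by linarith : (0:ℝ) < 2*ξ-1))]
  have r3 : Real.Gamma (1+2*ξ) = (2*ξ) * Real.Gamma (2*ξ) := by
    conv_lhs => rw [show (1+2*ξ : ℝ) = (2*ξ) + 1 by ring]
    rw [Real.Gamma_add_one (ne_of_gt (by linarith : (0:ℝ) < 2*ξ))]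
  rw [r3, r2, r1]
  set G := Real.Gamma (2*ξ-2) with hGdef
  have hA : (14:ℝ)*G ≤ (2*ξ-2)*G := mul_le_mul_of_nonneg_right (by linarith) hG.le
  have hB : (15:ℝ)*((2*ξ-2)*G) ≤ (2*ξ-1)*((2*ξ-2)*G) :=
    mul_le_mul_of_nonneg_right (by linarith) (mul_nonneg (by linarith) hG.le)
  have hC : (16:ℝ)*((2*ξ-1)*((2*ξ-2)*G)) ≤ (2*ξ)*((2*ξ-1)*((2*ξ-2)*G)) :=
    mul_le_mul_of_nonneg_right (by linarith) (mul_nonneg (by linarith) (mul_nonneg (by linarith) hG.le))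
  have hB' : (16:ℝ)*(15*((2*ξ-2)*G)) ≤ 16*((2*ξ-1)*((2*ξ-2)*G)) := by linarith
  have hA' : (16:ℝ)*(15*(14*G)) ≤ 16*(15*((2*ξ-2)*G)) := by linarith
  nlinarith [h1]

lemma auxGev_digamma_bounds {ξ : ℝ} (hξ : 1 ≤ ξ) :
    Real.log ξ ≤ digamma (1+ξ) ∧ digamma (1+ξ) ≤ Real.log (1+ξ) := by
  have hξ0 : (0:ℝ) < ξ := by linarith
  have h1ξ : (0:ℝ) < 1+ξ := by linarith
  have hd : DifferentiableAt ℝ (Real.log ∘ Real.Gamma) (1+ξ) := by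
    have hg : DifferentiableAt ℝ Real.Gamma (1+ξ) :=
      Real.differentiableAt_Gamma (fun m => by
        have : (0:ℝ) ≤ (m:ℝ) := m.cast_nonneg
        exact ne_of_gt (by linarith))
    exact (Real.differentiableAt_log (Real.Gamma_pos_of_pos h1ξ).ne').comp _ hg
  constructor
  · have H := convexOn_log_Gamma.slope_le_deriv (show ξ ∈ Ioi 0 from hξ0)
      (show 1+ξ ∈ Ioi 0 from h1ξ) (by linarith) hd
    rw [slope_def_field] at H
    simp only [Function.comp] at H
    have e1 : Real.log (Real.Gamma (1+ξ)) - Real.log (Real.Gamma ξ) = Real.log ξ := by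
      rw [show (1:ℝ)+ξ = ξ+1 by ring, auxGev_logGamma_succ hξ0]; ring
    rw [show (1+ξ-ξ : ℝ) = 1 by ring, div_one, e1] at H
    exact H
  · have H := convexOn_log_Gamma.deriv_le_slope (show 1+ξ ∈ Ioi 0 from h1ξ)
      (show 2+ξ ∈ Ioi 0 by simp; linarith) (by linarith) hd
    rw [slope_def_field] at H
    simp only [Function.comp] at H
    have e1 : Real.log (Real.Gamma (2+ξ)) - Real.log (Real.Gamma (1+ξ)) = Real.log (1+ξ) := by
      rw [show (2:ℝ)+ξ = (1+ξ)+1 by ring, auxGev_logGamma_succ h1ξ]; ring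
    rw [show (2+ξ-(1+ξ) : ℝ) = 1 by ring, div_one, e1] at H
    exact H

lemma auxGev_T_alg (ξ ψ G Γ2 γ p2 : ℝ) (hξ : 8 ≤ ξ) (hψ0 : 0 ≤ ψ) (hψξ : ψ ≤ ξ)
    (hG1 : 1 ≤ G) (hG14 : 14*G^2 ≤ Γ2) (hΓpos : 0 < Γ2) (hγ1 : 1/2 < γ) (hγ2 : γ < 2/3)
    (hπsq1 : 9 ≤ p2) (hπsq2 : p2 ≤ 16) :
    ξ^2 * Γ2 ≤ (p2/6 + (1-γ)^2) * (1+ξ)^2 * Γ2 +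
      (p2/6 + (2*(1-γ)*(γ+ψ) - p2/3) * G - (1+ψ)^2 * G^2) := by
  have hA : (3/2) * ((1+ξ)^2 * Γ2) ≤ (p2/6 + (1-γ)^2) * (1+ξ)^2 * Γ2 := by
    have h1 : (3/2:ℝ) ≤ p2/6 + (1-γ)^2 := by nlinarith
    have h2 : (0:ℝ) ≤ (1+ξ)^2 * Γ2 := by positivity
    nlinarith [mul_le_mul_of_nonneg_right h1 h2]
  have hBG : -6 * G ≤ (2*(1-γ)*(γ+ψ) - p2/3) * G := by
    have h1 : 0 ≤ 2*(1-γ)*(γ+ψ) := by nlinarith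
    have hD : (-6:ℝ) ≤ 2*(1-γ)*(γ+ψ) - p2/3 := by linarith
    exact mul_le_mul_of_nonneg_right hD (by linarith)
  have hC : (1+ψ)^2 * G^2 ≤ (1+ξ)^2 * G^2 := by
    have h0 : (1+ψ)^2 ≤ (1+ξ)^2 := by nlinarith
    exact mul_le_mul_of_nonneg_right h0 (sq_nonneg G)
  have hG2 : G ≤ G^2 := by
    nlinarith [mul_nonneg (show (0:ℝ) ≤ G-1 by linarith) (show (0:ℝ) ≤ G by linarith)]
  have hPG : 14 * ((1+ξ)^2 * G^2) ≤ (1+ξ)^2 * Γ2 := by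
    nlinarith [mul_le_mul_of_nonneg_left hG14 (sq_nonneg (1+ξ))]
  have hΓP : Γ2 ≤ (1+ξ)^2 * Γ2 := by
    nlinarith [mul_nonneg (show (0:ℝ) ≤ ξ^2+2*ξ by nlinarith) hΓpos.le]
  have hξP : ξ^2 * Γ2 ≤ (1+ξ)^2 * Γ2 := by
    nlinarith [mul_nonneg (show (0:ℝ) ≤ 1+2*ξ by linarith) hΓpos.le]
  linarith [hA, hBG, hC, hG2, hPG, hΓP, hξP, hG14, hπsq1]

lemma auxGev_T_lower {ξ : ℝ} (hξ : 8 ≤ ξ) :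
    ξ^2 * Real.Gamma (1+2*ξ) ≤ jeffreysT1 ξ + jeffreysT2 ξ := by
  have hψb := auxGev_digamma_bounds (by linarith : (1:ℝ) ≤ ξ)
  have hψ0 : 0 ≤ digamma (1+ξ) := le_trans (Real.log_nonneg (by linarith)) hψb.1
  have hψξ : digamma (1+ξ) ≤ ξ := hψb.2.trans
    (by linarith [Real.log_le_sub_one_of_pos (show (0:ℝ) < 1+ξ by linarith)])
  have hπ1 : 3 < Real.pi := Real.pi_gt_three
  have hπ2 : Real.pi ≤ 4 := Real.pi_le_four
  simp only [jeffreysT1, jeffreysT2]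
  have := auxGev_T_alg ξ (digamma (1+ξ)) (Real.Gamma (2+ξ)) (Real.Gamma (1+2*ξ))
    Real.eulerMascheroniConstant (Real.pi^2) hξ hψ0 hψξ
    (auxGev_one_le_Gamma (by linarith)) (auxGev_Gamma_sq_le hξ)
    (Real.Gamma_pos_of_pos (by linarith))
    Real.one_half_lt_eulerMascheroniConstant Real.eulerMascheroniConstant_lt_two_thirds
    (by nlinarith) (by nlinarith)
  linarith [this]

lemma auxGev_jeffreys_lower {ξ : ℝ} (hξ : 8 ≤ ξ) :
    ξ⁻¹ * Real.sqrt (Real.Gamma (1+2*ξ)) ≤ jeffreysXi ξ := by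
  have hξ0 : (0:ℝ) < ξ := by linarith
  rw [jeffreysXi, if_pos (by linarith : (-1/2:ℝ) < ξ)]
  have h1 : Real.sqrt (ξ^2 * Real.Gamma (1+2*ξ)) ≤ Real.sqrt (jeffreysT1 ξ + jeffreysT2 ξ) :=
    Real.sqrt_le_sqrt (auxGev_T_lower hξ)
  have h2 : Real.sqrt (ξ^2 * Real.Gamma (1+2*ξ)) = ξ * Real.sqrt (Real.Gamma (1+2*ξ)) := by
    rw [Real.sqrt_mul (sq_nonneg ξ), Real.sqrt_sq hξ0.le]
  calc ξ⁻¹ * Real.sqrt (Real.Gamma (1+2*ξ))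
      = (ξ^2)⁻¹ * (ξ * Real.sqrt (Real.Gamma (1+2*ξ))) := by
        field_simp
    _ = (ξ^2)⁻¹ * Real.sqrt (ξ^2 * Real.Gamma (1+2*ξ)) := by rw [h2]
    _ ≤ (ξ^2)⁻¹ * Real.sqrt (jeffreysT1 ξ + jeffreysT2 ξ) :=
        mul_le_mul_of_nonneg_left h1 (by positivity)

lemma auxGev_dens_lower (n : ℕ) (y : Fin n → ℝ) {R ξ μ σ : ℝ}
    (hR1 : 1 ≤ R) (hys : ∀ i, 0 ≤ y i - μ ∧ y i - μ ≤ R)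
    (hξ : 1 ≤ ξ) (hσ1 : ξ < σ) (hσ2 : σ < 2*ξ) :
    ((2*ξ)^(n+1) * (1+R)^(2*n) * Real.exp (n:ℝ))⁻¹ ≤ gevDens n y μ σ ξ := by
  have hξ0 : (0:ℝ) < ξ := by linarith
  have hσ0 : (0:ℝ) < σ := by linarith
  have hR0 : (0:ℝ) < 1 + R := by linarith
  have ht1 : ∀ i, 1 ≤ 1 + ξ * (y i - μ) / σ := fun i => by
    have h1 := (hys i).1
    have h2 : 0 ≤ ξ * (y i - μ) / σ := by positivity
    linarith
  have htR : ∀ i, 1 + ξ * (y i - μ) / σ ≤ 1 + R := fun i => by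
    have h1 := (hys i).1
    have h2 := (hys i).2
    have h3 : ξ * (y i - μ) / σ ≤ y i - μ := by
      rw [div_le_iff₀ hσ0]
      calc ξ * (y i - μ) ≤ σ * (y i - μ) := mul_le_mul_of_nonneg_right hσ1.le h1
        _ = (y i - μ) * σ := mul_comm _ _
    linarith
  have hpos : ∀ i, 0 < 1 + ξ * (y i - μ) / σ := fun i => zero_lt_one.trans_le (ht1 i)
  rw [gevDens, if_neg hξ0.ne', if_pos hpos]
  have e0 : ((2*ξ)^(n+1) * (1+R)^(2*n) * Real.exp (n:ℝ))⁻¹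
      = (2*ξ) ^ (-((n:ℝ)+1)) * ((1+R) ^ (-(2:ℝ)))^n * Real.exp (-(n:ℝ)) := by
    rw [Real.exp_neg]
    rw [show (-((n:ℝ)+1)) = -(((n+1:ℕ):ℝ)) by push_cast; ring]
    rw [Real.rpow_neg (by linarith : (0:ℝ) ≤ 2*ξ), Real.rpow_natCast]
    rw [show ((1+R) ^ (-(2:ℝ))) = ((1+R)^(2:ℕ))⁻¹ by
      rw [show (-(2:ℝ)) = -((2:ℕ):ℝ) by norm_num, Real.rpow_neg hR0.le, Real.rpow_natCast]]
    rw [inv_pow, ← pow_mul]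
    rw [mul_inv, mul_inv]
  rw [e0]
  have hexp1 : -((n:ℝ)+1) ≤ 0 := by
    have : (0:ℝ) ≤ (n:ℝ) := Nat.cast_nonneg n
    linarith
  have f1 : (2*ξ) ^ (-((n:ℝ)+1)) ≤ σ ^ (-((n:ℝ)+1)) :=
    Real.rpow_le_rpow_of_nonpos hσ0 hσ2.le hexp1
  have f2 : ((1+R) ^ (-(2:ℝ)))^n ≤ ∏ i, (1 + ξ*(y i - μ)/σ) ^ (-(1+1/ξ)) := by
    have e1 : ((1+R)^(-(2:ℝ)))^n = ∏ _i : Fin n, (1+R)^(-(2:ℝ)) := by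
      simp [Finset.prod_const]
    rw [e1]
    refine Finset.prod_le_prod (fun i _ => Real.rpow_nonneg hR0.le _) (fun i _ => ?_)
    have h1ξ : 1/ξ ≤ 1 := by rw [div_le_one hξ0]; linarith
    have h1ξ' : 0 < 1/ξ := by positivity
    calc (1+R) ^ (-(2:ℝ)) ≤ (1+R) ^ (-(1+1/ξ)) :=
          Real.rpow_le_rpow_of_exponent_le (by linarith) (by linarith)
      _ ≤ (1 + ξ*(y i - μ)/σ) ^ (-(1+1/ξ)) :=
          Real.rpow_le_rpow_of_nonpos (hpos i) (htR i) (by linarith)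
  have f3 : Real.exp (-(n:ℝ)) ≤ Real.exp (-∑ i, (1 + ξ*(y i - μ)/σ) ^ (-1/ξ)) := by
    rw [Real.exp_le_exp]
    refine neg_le_neg ?_
    calc ∑ i, (1 + ξ*(y i - μ)/σ) ^ (-1/ξ) ≤ ∑ _i : Fin n, (1:ℝ) :=
          Finset.sum_le_sum (fun i _ => Real.rpow_le_one_of_one_le_of_nonpos (ht1 i)
            (by rw [neg_div]; exact neg_nonpos.mpr (by positivity)))
      _ = n := by simp
  have g2 : 0 ≤ ((1+R) ^ (-(2:ℝ)))^n := pow_nonneg (Real.rpow_nonneg hR0.le _) n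
  have gσ : 0 ≤ σ ^ (-((n:ℝ)+1)) := Real.rpow_nonneg hσ0.le _
  have gprod : 0 ≤ ∏ i, (1 + ξ*(y i - μ)/σ) ^ (-(1+1/ξ)) :=
    Finset.prod_nonneg (fun i _ => Real.rpow_nonneg (hpos i).le _)
  exact mul_le_mul (mul_le_mul f1 f2 g2 gσ) f3 (Real.exp_pos _).le
    (mul_nonneg gσ gprod)

/-- For every sample size `n ≥ 1` and all data `y_1 < ⋯ < y_n`, the Jeffreys
prior for the GEV distribution yields an improper posterior:
`K_n(π_J; y) = ∞`. -/
theorem gev_jeffreys_improper (n : ℕ) (hn : 1 ≤ n) (y : Fin n → ℝ)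
    (hy : StrictMono y) :
    gevK n y jeffreysXi = ⊤ := by
  have hn0 : 0 < n := hn
  set i0 : Fin n := ⟨0, hn0⟩ with hi0
  set iN : Fin n := ⟨n-1, by omega⟩ with hiN
  set R : ℝ := y iN - y i0 + 1 with hR
  have hii : y i0 ≤ y iN := hy.monotone (by simp [hi0, hiN, Fin.le_def])
  have hR1 : 1 ≤ R := by simp [hR]; linarith
  set K0 : ℝ := 2^(2*n+2) * (1+R)^(4*n) * (Real.exp (n:ℝ))^2 with hK0
  set A : ℝ := max 8 (max K0 (2*(n:ℝ)+3)) with hA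
  -- key pointwise bound
  have key : ∀ ξ : ℝ, ξ ∈ Ioi A → (1:ℝ≥0∞) ≤ ENNReal.ofReal (jeffreysXi ξ) *
      ∫⁻ μ : ℝ, ∫⁻ σ in Set.Ioi (0 : ℝ), ENNReal.ofReal (gevDens n y μ σ ξ) := by
    intro ξ hξA
    rw [mem_Ioi] at hξA
    have hξ8 : 8 ≤ ξ := le_trans (le_max_left _ _) hξA.le
    have hξK : K0 ≤ ξ := le_trans ((le_max_left _ _).trans (le_max_right _ _)) hξA.le
    have hξn : 2*(n:ℝ)+3 ≤ ξ := le_trans ((le_max_right _ _).trans (le_max_right _ _)) hξA.le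
    have hξ0 : (0:ℝ) < ξ := by linarith
    set Q : ℝ := (2*ξ)^(n+1) * (1+R)^(2*n) * Real.exp (n:ℝ) with hQ
    have hQ0 : 0 < Q := by positivity
    -- inner sigma integral bound, for suitable μ
    have hstep1 : ∀ μ ∈ Ioo (y i0 - 1) (y i0),
        ENNReal.ofReal (Q⁻¹ * ξ) ≤ ∫⁻ σ in Set.Ioi (0 : ℝ), ENNReal.ofReal (gevDens n y μ σ ξ) := by
      intro μ hμ
      have hys : ∀ i, 0 ≤ y i - μ ∧ y i - μ ≤ R := by
        intro i
        have h1 : y i0 ≤ y i := hy.monotone (by simp [hi0, Fin.le_def])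
        have h2 : y i ≤ y iN := hy.monotone (by simp [hiN, Fin.le_def]; omega)
        constructor
        · linarith [hμ.2]
        · simp only [hR]; linarith [hμ.1]
      calc ENNReal.ofReal (Q⁻¹ * ξ) = ENNReal.ofReal Q⁻¹ * volume (Ioo ξ (2*ξ)) := by
            rw [Real.volume_Ioo, show 2*ξ - ξ = ξ by ring,
              ENNReal.ofReal_mul (by positivity)]
        _ = ∫⁻ _σ in Ioo ξ (2*ξ), ENNReal.ofReal Q⁻¹ := (setLIntegral_const _ _).symm
        _ ≤ ∫⁻ σ in Ioo ξ (2*ξ), ENNReal.ofReal (gevDens n y μ σ ξ) := by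
            refine setLIntegral_mono' measurableSet_Ioo (fun σ hσ => ?_)
            exact ENNReal.ofReal_le_ofReal
              (auxGev_dens_lower n y hR1 hys (by linarith) hσ.1 hσ.2)
        _ ≤ ∫⁻ σ in Set.Ioi (0 : ℝ), ENNReal.ofReal (gevDens n y μ σ ξ) :=
            lintegral_mono_set (fun σ hσ => lt_trans hξ0 hσ.1)
    -- mu integral bound
    have hstep2 : ENNReal.ofReal (Q⁻¹ * ξ) ≤
        ∫⁻ μ : ℝ, ∫⁻ σ in Set.Ioi (0 : ℝ), ENNReal.ofReal (gevDens n y μ σ ξ) := by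
      calc ENNReal.ofReal (Q⁻¹ * ξ)
          = ENNReal.ofReal (Q⁻¹ * ξ) * volume (Ioo (y i0 - 1) (y i0)) := by
            rw [Real.volume_Ioo, show y i0 - (y i0 - 1) = 1 by ring]
            simp
        _ = ∫⁻ _μ in Ioo (y i0 - 1) (y i0), ENNReal.ofReal (Q⁻¹ * ξ) :=
            (setLIntegral_const _ _).symm
        _ ≤ ∫⁻ μ in Ioo (y i0 - 1) (y i0),
              ∫⁻ σ in Set.Ioi (0 : ℝ), ENNReal.ofReal (gevDens n y μ σ ξ) :=
            setLIntegral_mono' measurableSet_Ioo hstep1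
        _ ≤ _ := setLIntegral_le_lintegral _ _
    -- jeffreys bound
    have hjeff : Q⁻¹ * ξ * jeffreysXi ξ ≥ 1 := by
      have h1 := auxGev_jeffreys_lower hξ8
      have hQsq : Q^2 ≤ Real.Gamma (1+2*ξ) := by
        have e1 : Q^2 = K0 * ξ^(2*n+2) := by
          simp only [hQ, hK0]; ring
        have e2 : K0 * ξ^(2*n+2) ≤ ξ^(2*n+3) := by
          rw [pow_succ ξ (2*n+2), mul_comm (ξ^(2*n+2)) ξ]
          exact mul_le_mul_of_nonneg_right hξK (by positivity)
        have e3 : ξ^(2*n+3) ≤ ξ ^ ξ := by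
          rw [← Real.rpow_natCast ξ (2*n+3)]
          refine Real.rpow_le_rpow_of_exponent_le (by linarith) ?_
          push_cast; linarith
        calc Q^2 = K0 * ξ^(2*n+2) := e1
          _ ≤ ξ^(2*n+3) := e2
          _ ≤ ξ ^ ξ := e3
          _ ≤ Real.Gamma (1+2*ξ) := auxGev_Gamma_ge_rpow (by linarith)
      have hQs : Q ≤ Real.sqrt (Real.Gamma (1+2*ξ)) := by
        rw [show Q = Real.sqrt (Q^2) by rw [Real.sqrt_sq hQ0.le]]
        exact Real.sqrt_le_sqrt hQsq
      have h2 : Q⁻¹ * ξ * (ξ⁻¹ * Real.sqrt (Real.Gamma (1+2*ξ)))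
          = Q⁻¹ * Real.sqrt (Real.Gamma (1+2*ξ)) := by
        field_simp
      have h3 : (1:ℝ) ≤ Q⁻¹ * Real.sqrt (Real.Gamma (1+2*ξ)) := by
        have := mul_le_mul_of_nonneg_left hQs (inv_nonneg.mpr hQ0.le)
        rwa [inv_mul_cancel₀ hQ0.ne'] at this
      have h4 : Q⁻¹ * ξ * (ξ⁻¹ * Real.sqrt (Real.Gamma (1+2*ξ))) ≤ Q⁻¹ * ξ * jeffreysXi ξ :=
        mul_le_mul_of_nonneg_left h1 (by positivity)
      rw [h2] at h4
      linarith
    -- combine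
    have hjx0 : 0 ≤ jeffreysXi ξ := by
      by_contra h
      push_neg at h
      nlinarith [hjeff, mul_pos (mul_pos (inv_pos.mpr hQ0) hξ0) (neg_pos.mpr h)]
    calc (1:ℝ≥0∞) ≤ ENNReal.ofReal (jeffreysXi ξ * (Q⁻¹ * ξ)) := by
          rw [← ENNReal.ofReal_one]
          refine ENNReal.ofReal_le_ofReal ?_
          rw [show jeffreysXi ξ * (Q⁻¹ * ξ) = Q⁻¹ * ξ * jeffreysXi ξ from by ring]
          exact hjeff
      _ = ENNReal.ofReal (jeffreysXi ξ) * ENNReal.ofReal (Q⁻¹ * ξ) :=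
          ENNReal.ofReal_mul hjx0
      _ ≤ ENNReal.ofReal (jeffreysXi ξ) * ∫⁻ μ : ℝ, ∫⁻ σ in Set.Ioi (0 : ℝ),
            ENNReal.ofReal (gevDens n y μ σ ξ) := mul_le_mul_right hstep2 _
  -- conclude
  rw [gevK, eq_top_iff]
  calc (⊤:ℝ≥0∞) = ∫⁻ ξ in Ioi A, (1:ℝ≥0∞) := by rw [setLIntegral_one, Real.volume_Ioi]
    _ ≤ ∫⁻ ξ in Ioi A, ENNReal.ofReal (jeffreysXi ξ) *
          ∫⁻ μ : ℝ, ∫⁻ σ in Set.Ioi (0 : ℝ), ENNReal.ofReal (gevDens n y μ σ ξ) :=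
        setLIntegral_mono' measurableSet_Ioi key
    _ ≤ _ := setLIntegral_le_lintegral _ _
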